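/- A problem f :⊆ ℕ^ℕ ⇉ ℕ^ℕ has a computable realizer if and only if Player II has a computable winning strategy in the Wadge game of f (i.e., a winning strategy σ : List (List ℕ) → List ℕ that is a computable function in the standard sense via encodings). -/

import Mathlib

noncomputable section

/-- Baire space `ℕ^ℕ`. -/
abbrev Baire : Type := ℕ → ℕ

/-- The Cantor pairing `⟨n,k⟩ = (n+k)(n+k+1)/2 + k`. -/
def cpair (n k : ℕ) : ℕ := (n + k) * (n + k + 1) / 2 + k

/-- The inverse of the Cantor pairing. -/
noncomputable def cunpair (m : ℕ) : ℕ × ℕ :=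
  Classical.epsilon fun x : ℕ × ℕ => cpair x.1 x.2 = m

/-- A fixed bijective numbering `w : ℕ → List ℕ` of finite words. -/
def word (n : ℕ) : List ℕ := Denumerable.ofNat (List ℕ) n

/-- `l` is a finite prefix of the infinite sequence `p`. -/
def IsPrefixOf (l : List ℕ) (p : Baire) : Prop := l = (List.range l.length).map p

/-- Two words are comparable in the prefix order. -/
def WordComparable (u v : List ℕ) : Prop := u <+: v ∨ v <+: u

/-- The word `w(n_i)` decoded from the `i`-th entry of the code `q`. -/
noncomputable def wn (q : Baire) (i : ℕ) : List ℕ := word (cunpair (q i)).1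

/-- The word `w(k_i)` decoded from the `i`-th entry of the code `q`. -/
noncomputable def wk (q : Baire) (i : ℕ) : List ℕ := word (cunpair (q i)).2

/-- The code `q` is consistent. -/
def ConsistentCode (q : Baire) : Prop :=
  ∀ i j, WordComparable (wn q i) (wn q j) → WordComparable (wk q i) (wk q j)

/-- The continuous partial function `Φ_q :⊆ ℕ^ℕ → ℕ^ℕ` coded by `q`. -/
noncomputable def Phi (q : Baire) : Baire →. Baire := fun p =>
  ⟨ConsistentCode q ∧ ∀ m : ℕ, ∃ i, IsPrefixOf (wn q i) p ∧ m < (wk q i).length,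
   fun _ => Classical.epsilon fun x : Baire =>
      ∀ i, IsPrefixOf (wn q i) p → IsPrefixOf (wk q i) x⟩

/-- The pairing `⟨q,p⟩` on Baire space. -/
def bpair (q p : Baire) : Baire := fun n => if n % 2 = 0 then q (n / 2) else p (n / 2)

/-- Even part of a sequence. -/
def evens (r : Baire) : Baire := fun n => r (2 * n)

/-- Odd part of a sequence. -/
def odds (r : Baire) : Baire := fun n => r (2 * n + 1)

/-- The universal function `U(⟨q,p⟩) = Φ_q(p)`. -/
noncomputable def U : Baire →. Baire := fun r => Phi (evens r) (odds r)

/-- `h` is monotone for the prefix order. -/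
def MonotoneWord (h : List ℕ → List ℕ) : Prop := ∀ u v, u <+: v → h u <+: h v

/-- `h` approximates the partial function `F`. -/
def Approximates (h : List ℕ → List ℕ) (F : Baire →. Baire) : Prop :=
  ∀ p, ∀ hp : (F p).Dom,
    (∀ v, IsPrefixOf v p → IsPrefixOf (h v) ((F p).get hp)) ∧
    (∀ m : ℕ, ∃ v, IsPrefixOf v p ∧ m < (h v).length)

/-- `F :⊆ ℕ^ℕ → ℕ^ℕ` is continuous: some monotone word function approximates it. -/
def ContinuousPF (F : Baire →. Baire) : Prop := ∃ h, MonotoneWord h ∧ Approximates h F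

/-- `F :⊆ ℕ^ℕ → ℕ^ℕ` is computable: some computable monotone word function approximates it. -/
def ComputablePF (F : Baire →. Baire) : Prop :=
  ∃ h, Computable h ∧ MonotoneWord h ∧ Approximates h F

/-- A total function is computable iff it is computable as a partial function with full domain. -/
def ComputableTotal (F : Baire → Baire) : Prop := ComputablePF fun p => Part.some (F p)

/-- A problem (multivalued function on Baire space). -/
abbrev Problem : Type := Baire → Set Baire

/-- `F` is a realizer of the problem `f`. -/
def Realizes (F : Baire →. Baire) (f : Problem) : Prop :=
  ∀ p, (f p).Nonempty → ∃ h : (F p).Dom, (F p).get h ∈ f p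

/-- `f` is continuous: it has a continuous realizer. -/
def ContinuousProblem (f : Problem) : Prop := ∃ F, ContinuousPF F ∧ Realizes F f

/-- The discontinuity problem `DIS`. -/
noncomputable def DIS : Problem := fun p => {q | q ∉ U p}

/-- `D` is a discontinuity function for `f`. -/
def DiscontinuityFunction (D : Baire → Baire) (f : Problem) : Prop :=
  ∀ q, (f (D q)).Nonempty ∧ ∀ y ∈ Phi q (D q), y ∉ f (D q)

/-- `f` is computably discontinuous. -/
def ComputablyDiscontinuous (f : Problem) : Prop :=
  ∃ D, ComputableTotal D ∧ DiscontinuityFunction D f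

/-- `f` is effectively discontinuous. -/
def EffectivelyDiscontinuous (f : Problem) : Prop :=
  ∃ D : Baire → Baire, Continuous D ∧ DiscontinuityFunction D f

/-- Weihrauch reducibility `f ≤_W g`. -/
def WeihrauchRed (f g : Problem) : Prop :=
  ∃ H K : Baire →. Baire, ComputablePF H ∧ ComputablePF K ∧
    ∀ G : Baire →. Baire, Realizes G g →
      Realizes (fun p => (K p).bind fun s => (G s).bind fun t => H (bpair p t)) f

/-- Strong Weihrauch reducibility `f ≤_sW g`. -/
def StrongWeihrauchRed (f g : Problem) : Prop :=
  ∃ H K : Baire →. Baire, ComputablePF H ∧ ComputablePF K ∧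
    ∀ G : Baire →. Baire, Realizes G g →
      Realizes (fun p => (K p).bind fun s => (G s).bind fun t => H t) f

/-- Continuous Weihrauch reducibility `f ≤*_W g`. -/
def ContWeihrauchRed (f g : Problem) : Prop :=
  ∃ H K : Baire →. Baire, ContinuousPF H ∧ ContinuousPF K ∧
    ∀ G : Baire →. Baire, Realizes G g →
      Realizes (fun p => (K p).bind fun s => (G s).bind fun t => H (bpair p t)) f

/-- Continuous strong Weihrauch reducibility `f ≤*_sW g`. -/
def ContStrongWeihrauchRed (f g : Problem) : Prop :=
  ∃ H K : Baire →. Baire, ContinuousPF H ∧ ContinuousPF K ∧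
    ∀ G : Baire →. Baire, Realizes G g →
      Realizes (fun p => (K p).bind fun s => (G s).bind fun t => H t) f

/-- Concatenation of the first `n` moves. -/
def concatN (ms : ℕ → List ℕ) (n : ℕ) : List ℕ := ((List.range n).map ms).flatten

/-- The concatenated play is infinite. -/
def PlayInf (ms : ℕ → List ℕ) : Prop := ∀ m : ℕ, ∃ n, m < (concatN ms n).length

/-- The infinite sequence determined by an infinite play. -/
noncomputable def playLim (ms : ℕ → List ℕ) : Baire :=
  Classical.epsilon fun p : Baire => ∀ n, IsPrefixOf (concatN ms n) p

/-- Player II wins the run of the Wadge game of `f` given by the moves `xs` of I and `ys` of II. -/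
def WadgeIIWins (f : Problem) (xs ys : ℕ → List ℕ) : Prop :=
  (PlayInf xs ∧ (f (playLim xs)).Nonempty) → (PlayInf ys ∧ playLim ys ∈ f (playLim xs))

/-- The list of first `n` moves. -/
def histW (xs : ℕ → List ℕ) (n : ℕ) : List (List ℕ) := (List.range n).map xs

/-- `σ` is a winning strategy for Player II in the Wadge game of `f`. -/
def WadgeWinningII (f : Problem) (σ : List (List ℕ) → List ℕ) : Prop :=
  ∀ xs : ℕ → List ℕ, WadgeIIWins f xs fun i => σ (histW xs (i + 1))

/-- `σ` is a winning strategy for Player I in the Wadge game of `f`. -/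
def WadgeWinningI (f : Problem) (σ : List (List ℕ) → List ℕ) : Prop :=
  ∀ ys : ℕ → List ℕ, ¬ WadgeIIWins f (fun i => σ (histW ys i)) ys

/-- The list of first `n` values of a sequence. -/
def histN (x : Baire) (n : ℕ) : List ℕ := (List.range n).map x

/-- Player II wins the run `(x,y)` of the Lipschitz game of `f`. -/
def LipIIWins (f : Problem) (x y : Baire) : Prop := (f x).Nonempty → y ∈ f x

/-- `σ` is a winning strategy for Player II in the Lipschitz game of `f`. -/
def LipWinningII (f : Problem) (σ : List ℕ → ℕ) : Prop :=
  ∀ x : Baire, LipIIWins f x fun i => σ (histN x (i + 1))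

/-- `σ` is a winning strategy for Player I in the Lipschitz game of `f`. -/
def LipWinningI (f : Problem) (σ : List ℕ → ℕ) : Prop :=
  ∀ y : Baire, ¬ LipIIWins f (fun i => σ (histN y i)) y

/-- `σ` is a winning strategy for Player II in the Gale–Stewart game `A`. -/
def GSWinningII (A : Set Baire) (σ : List ℕ → ℕ) : Prop :=
  ∀ x : Baire, bpair x (fun i => σ (histN x (i + 1))) ∈ A

/-- `σ` is a winning strategy for Player I in the Gale–Stewart game `A`. -/
def GSWinningI (A : Set Baire) (σ : List ℕ → ℕ) : Prop :=
  ∀ y : Baire, bpair (fun i => σ (histN y i)) y ∉ A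

/-- The totalization `Tf` of `f`. -/
def Totalization (f : Problem) : Problem := fun p => {q | (f p).Nonempty → q ∈ f p}

/-- The paired graph `⟨graph(Tf)⟩ ⊆ ℕ^ℕ`. -/
def pairedGraph (f : Problem) : Set Baire :=
  {r | ∃ x y : Baire, r = bpair x y ∧ y ∈ Totalization f x}

/-- Domain of the word concatenation map `w*`. -/
def wstarDom (p : Baire) : Prop := PlayInf fun i => word (p i)

/-- The word concatenation map `w* : p ↦ w(p 0) w(p 1) ⋯` (on its domain). -/
noncomputable def wstar (p : Baire) : Baire := playLim fun i => word (p i)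

/-- The problem `f^w = w*⁻¹ ∘ f ∘ w*`. -/
noncomputable def wordLift (f : Problem) : Problem := fun p =>
  {q | wstarDom p ∧ (f (wstar p)).Nonempty ∧ wstarDom q ∧ wstar q ∈ f (wstar p)}

/-- The `i`-th component of a tupled sequence. -/
def tupleComp (p : Baire) (i : ℕ) : Baire := fun n => p (cpair i n)

/-- The parallelization `⟨f⟩` of `f`. -/
def Parallelization (f : Problem) : Problem := fun p =>
  {q | ∀ i, tupleComp q i ∈ f (tupleComp p i)}

/-- Turing reducibility: `p` is computable relative to the oracle `q`. -/
def TuringLe (p q : Baire) : Prop := ∃ F : Baire →. Baire, ComputablePF F ∧ p ∈ F q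

end


/-!
A monotone word function `h` becomes a strategy for Player II that answers I's `n`-th move with
the part of `h (x₀ ⋯ xₙ)` it has not played yet, so that II's play telescopes to `h` applied to
I's play; if `h` approximates a realizer, II's play converges to a solution. Conversely, a
strategy `σ` yields the realizer `p ↦` (II's play against I playing the letters of `p` one at a
time), approximated by the monotone word function `v ↦` (II's answers to the letters of `v`).
Both translations preserve computability.
-/

section Prefix

theorem isPrefixOf_iff_getElem {l : List ℕ} {p : Baire} :
    IsPrefixOf l p ↔ ∀ j (hj : j < l.length), l[j] = p j := by
  constructor
  · intro h j hj
    simpa using List.getElem_of_eq h hj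
  · intro h
    exact List.ext_getElem (by simp) fun j hj _ => by simp [h j hj]

theorem isPrefixOf_histN (p : Baire) (n : ℕ) : IsPrefixOf (histN p n) p := by
  simp [IsPrefixOf, histN]

theorem IsPrefixOf.getD_eq {l : List ℕ} {p : Baire} (h : IsPrefixOf l p) {j : ℕ}
    (hj : j < l.length) : l.getD j 0 = p j := by
  rw [List.getD_eq_getElem _ _ hj, isPrefixOf_iff_getElem.1 h j hj]

theorem IsPrefixOf.of_prefix {u v : List ℕ} {p : Baire} (huv : u <+: v) (h : IsPrefixOf v p) :
    IsPrefixOf u p := by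
  refine isPrefixOf_iff_getElem.2 fun j hj => ?_
  rw [huv.getElem hj]
  exact isPrefixOf_iff_getElem.1 h j (lt_of_lt_of_le hj huv.length_le)

theorem IsPrefixOf.prefix_of_length_le {u v : List ℕ} {p : Baire} (hu : IsPrefixOf u p)
    (hv : IsPrefixOf v p) (hle : u.length ≤ v.length) : u <+: v := by
  rw [List.prefix_iff_eq_take, hv, ← List.map_take, List.take_range,
    min_eq_left (by simpa using hle)]
  exact hu

end Prefix

section Play

theorem concatN_succ (ms : ℕ → List ℕ) (n : ℕ) :
    concatN ms (n + 1) = concatN ms n ++ ms n := by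
  simp [concatN, List.range_succ]

theorem concatN_prefix_concatN {ms : ℕ → List ℕ} {m n : ℕ} (h : m ≤ n) :
    concatN ms m <+: concatN ms n := by
  induction h with
  | refl => exact List.prefix_refl _
  | step _ ih => exact (concatN_succ ms _).symm ▸ ih.trans (List.prefix_append _ _)

theorem concatN_congr {ms ms' : ℕ → List ℕ} {n : ℕ} (h : ∀ i < n, ms i = ms' i) :
    concatN ms n = concatN ms' n :=
  congrArg List.flatten (List.map_congr_left fun i hi => h i (List.mem_range.1 hi))

theorem computable_concatN {α : Type*} [Primcodable α] {ms : α → ℕ → List ℕ} {n : α → ℕ}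
    (hms : Computable₂ ms) (hn : Computable n) : Computable fun a => concatN (ms a) (n a) := by
  refine (Computable.nat_rec hn (Computable.const [])
    (Computable.list_append.comp (Computable.snd.comp Computable.snd)
      (hms.comp Computable.fst (Computable.fst.comp Computable.snd))).to₂).of_eq fun a => ?_
  induction n a with
  | zero => rfl
  | succ k ih => simp only [ih, concatN_succ]

theorem exists_forall_isPrefixOf_concatN {ms : ℕ → List ℕ} (h : PlayInf ms) :
    ∃ p : Baire, ∀ n, IsPrefixOf (concatN ms n) p := by
  refine ⟨fun m => (concatN ms (Nat.find (h m))).getD m 0, fun n => ?_⟩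
  refine isPrefixOf_iff_getElem.2 fun j hj => ?_
  have hj' : j < (concatN ms (Nat.find (h j))).length := Nat.find_spec (h j)
  rw [List.getD_eq_getElem _ _ hj']
  rcases le_total n (Nat.find (h j)) with hle | hle
  · rw [(concatN_prefix_concatN hle).getElem hj]
  · rw [(concatN_prefix_concatN hle).getElem hj']

theorem isPrefixOf_playLim {ms : ℕ → List ℕ} (h : PlayInf ms) (n : ℕ) :
    IsPrefixOf (concatN ms n) (playLim ms) :=
  Classical.epsilon_spec (exists_forall_isPrefixOf_concatN h) n

theorem playLim_eq_of_isPrefixOf {ms : ℕ → List ℕ} {p : Baire} (h : PlayInf ms)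
    (hp : ∀ n, IsPrefixOf (concatN ms n) p) : playLim ms = p := by
  funext m
  obtain ⟨n, hn⟩ := h m
  rw [← isPrefixOf_iff_getElem.1 (isPrefixOf_playLim h n) m hn,
    isPrefixOf_iff_getElem.1 (hp n) m hn]

def letters (p : Baire) : ℕ → List ℕ := fun j => [p j]

theorem concatN_letters (p : Baire) (n : ℕ) : concatN (letters p) n = histN p n := by
  induction n with
  | zero => rfl
  | succ k ih => rw [concatN_succ, ih, histN, histN, List.range_succ, List.map_append]; rfl

theorem playInf_letters (p : Baire) : PlayInf (letters p) :=
  fun m => ⟨m + 1, by simp [concatN_letters, histN]⟩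

theorem playLim_letters (p : Baire) : playLim (letters p) = p :=
  playLim_eq_of_isPrefixOf (playInf_letters p) fun n => concatN_letters p n ▸ isPrefixOf_histN p n

theorem histW_length (xs : ℕ → List ℕ) (n : ℕ) : (histW xs n).length = n := by
  simp [histW]

theorem dropLast_histW_succ (xs : ℕ → List ℕ) (n : ℕ) :
    (histW xs (n + 1)).dropLast = histW xs n := by
  simp [histW, List.range_succ]

def answers (σ : List (List ℕ) → List ℕ) (xs : ℕ → List ℕ) : ℕ → List ℕ :=
  fun i => σ (histW xs (i + 1))

theorem concatN_answers_congr (σ : List (List ℕ) → List ℕ) {xs xs' : ℕ → List ℕ} {n : ℕ}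
    (h : ∀ j < n, xs j = xs' j) : concatN (answers σ xs) n = concatN (answers σ xs') n :=
  concatN_congr fun i hi => congrArg σ <|
    List.map_congr_left fun j hj => h j (by have := List.mem_range.1 hj; omega)

end Play

section StrategyOfRealizer

/-- The `if` makes the first answer all of `h x₀` rather than its part beyond `h []`. -/
def strategyOf (h : List ℕ → List ℕ) (l : List (List ℕ)) : List ℕ :=
  (h l.flatten).drop (if l.length ≤ 1 then 0 else (h l.dropLast.flatten).length)

theorem computable_strategyOf {h : List ℕ → List ℕ} (hc : Computable h) :
    Computable (strategyOf h) := by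
  have hdropLast : Computable fun l : List (List ℕ) => l.dropLast :=
    (Primrec.list_take.comp (Primrec.nat_sub.comp Primrec.list_length (Primrec.const 1))
      Primrec.id).to_comp.of_eq fun l => List.dropLast_eq_take.symm
  have hprev : Computable fun l : List (List ℕ) =>
      if l.length ≤ 1 then 0 else (h l.dropLast.flatten).length :=
    (Computable.cond
      (Primrec.nat_le.comp Primrec.list_length (Primrec.const 1)).decide.to_comp
      (Computable.const 0)
      (Computable.list_length.comp (hc.comp (Primrec.list_flatten.to_comp.comp hdropLast)))).of_eq
      fun l => Bool.cond_decide _ _ _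
  exact Primrec.list_drop.to_comp.comp hprev (hc.comp Primrec.list_flatten.to_comp)

theorem concatN_answers_strategyOf {h : List ℕ → List ℕ} (hm : MonotoneWord h)
    (xs : ℕ → List ℕ) (n : ℕ) :
    concatN (answers (strategyOf h) xs) (n + 1) = h (concatN xs (n + 1)) := by
  induction n with
  | zero => simp [concatN, answers, strategyOf, histW]
  | succ k ih =>
    obtain ⟨t, ht⟩ := hm _ _ (concatN_prefix_concatN (ms := xs) (Nat.le_succ (k + 1)))
    rw [concatN_succ, ih, answers, strategyOf, histW_length, if_neg (by omega),
      dropLast_histW_succ]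
    change h (concatN xs (k + 1)) ++ (h (concatN xs (k + 2))).drop
      (h (concatN xs (k + 1))).length = _
    rw [← ht, List.drop_left]

theorem wadgeWinningII_strategyOf {f : Problem} {F : Baire →. Baire} {h : List ℕ → List ℕ}
    (hm : MonotoneWord h) (ha : Approximates h F) (hr : Realizes F f) :
    WadgeWinningII f (strategyOf h) := by
  rintro xs ⟨hxs, hne⟩
  obtain ⟨hdom, hsol⟩ := hr _ hne
  obtain ⟨hprefix, hunbounded⟩ := ha _ hdom
  have htel := concatN_answers_strategyOf hm xs
  have hys : PlayInf (answers (strategyOf h) xs) := by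
    intro m
    obtain ⟨v, hv, hmv⟩ := hunbounded m
    obtain ⟨n, hn⟩ := hxs v.length
    have hvn : v <+: concatN xs (n + 1) :=
      hv.prefix_of_length_le (isPrefixOf_playLim hxs _)
        (hn.le.trans (concatN_prefix_concatN n.le_succ).length_le)
    exact ⟨n + 1, htel n ▸ hmv.trans_le (hm _ _ hvn).length_le⟩
  have hlim : playLim (answers (strategyOf h) xs) = (F (playLim xs)).get hdom :=
    playLim_eq_of_isPrefixOf hys fun n =>
      (htel n ▸ hprefix _ (isPrefixOf_playLim hxs (n + 1))).of_prefix
        (concatN_prefix_concatN n.le_succ)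
  exact ⟨hys, hlim ▸ hsol⟩

end StrategyOfRealizer

section RealizerOfStrategy

variable (σ : List (List ℕ) → List ℕ)

/-- `getD` pads `v` with junk zeros; they are never read, since II's first `v.length` answers
depend only on I's first `v.length` moves. -/
def wordFunOf (v : List ℕ) : List ℕ :=
  concatN (answers σ (letters fun j => v.getD j 0)) v.length

noncomputable def realizerOf : Baire →. Baire := fun p =>
  ⟨PlayInf (answers σ (letters p)), fun _ => playLim (answers σ (letters p))⟩

theorem computable_wordFunOf (hσ : Computable σ) : Computable (wordFunOf σ) := by
  have hhist : Primrec₂ fun (v : List ℕ) (i : ℕ) =>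
      (List.range (i + 1)).map fun j => [v.getD j 0] :=
    Primrec.list_map (Primrec.list_range.comp (Primrec.succ.comp Primrec.snd))
      (Primrec.list_cons.comp ((Primrec.list_getD 0).comp (Primrec.fst.comp Primrec.fst)
        Primrec.snd) (Primrec.const [])).to₂
  exact computable_concatN (hσ.comp hhist.to_comp) Computable.list_length

theorem monotone_wordFunOf : MonotoneWord (wordFunOf σ) := by
  intro u v huv
  have hletters : ∀ j < u.length,
      letters (fun j => u.getD j 0) j = letters (fun j => v.getD j 0) j := by
    intro j hj
    simp only [letters, List.getD_eq_getElem _ _ hj,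
        List.getD_eq_getElem _ _ (hj.trans_le huv.length_le), huv.getElem hj]
  rw [wordFunOf, concatN_answers_congr σ hletters]
  exact concatN_prefix_concatN huv.length_le

theorem wordFunOf_eq_of_isPrefixOf {v : List ℕ} {p : Baire} (hv : IsPrefixOf v p) :
    wordFunOf σ v = concatN (answers σ (letters p)) v.length :=
  concatN_answers_congr σ fun j hj => by simp only [letters, hv.getD_eq hj]

theorem computablePF_realizerOf (hσ : Computable σ) : ComputablePF (realizerOf σ) := by
  refine ⟨wordFunOf σ, computable_wordFunOf σ hσ, monotone_wordFunOf σ, fun p hp => ⟨?_, ?_⟩⟩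
  · intro v hv
    rw [wordFunOf_eq_of_isPrefixOf σ hv]
    exact isPrefixOf_playLim hp v.length
  · intro m
    obtain ⟨n, hn⟩ := hp m
    refine ⟨histN p n, isPrefixOf_histN p n, ?_⟩
    rwa [wordFunOf_eq_of_isPrefixOf σ (isPrefixOf_histN p n), histN, List.length_map,
      List.length_range]

theorem realizes_realizerOf {f : Problem} (hσ : WadgeWinningII f σ) :
    Realizes (realizerOf σ) f := by
  intro p hne
  have hwin := hσ (letters p) ⟨playInf_letters p, (playLim_letters p).symm ▸ hne⟩
  rw [playLim_letters] at hwin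
  exact ⟨hwin.1, hwin.2⟩

end RealizerOfStrategy

/-- `f` has a computable realizer iff Player II has a computable winning strategy in the
Wadge game of `f`. -/
theorem computable_iff_computable_wadge_winning_II (f : Problem) :
    (∃ F : Baire →. Baire, ComputablePF F ∧ Realizes F f) ↔
      ∃ σ : List (List ℕ) → List ℕ, Computable σ ∧ WadgeWinningII f σ := by
  constructor
  · rintro ⟨F, ⟨h, hc, hm, ha⟩, hr⟩
    exact ⟨strategyOf h, computable_strategyOf hc, wadgeWinningII_strategyOf hm ha hr⟩
  · rintro ⟨σ, hc, hw⟩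
    exact ⟨realizerOf σ, computablePF_realizerOf σ hc, realizes_realizerOf σ hw⟩
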